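/- Let Π be an edge-disjoint SIMUG covering of a directed graph with chosen roots τ₁, …, τ_n (one per SIMUG). Then for every vertex j, there exist |P_j| vertex-disjoint directed paths from the set {τ₁, …, τ_n} to the set P_j of parametrized in-neighbors of j. -/

import Mathlib

/-!
The path to a parametrized in-neighbour `i` of `j` is taken inside the SIMUG `T k` containing the
edge `(i, j)`, from its root `τ k`; distinct in-neighbours give distinct SIMUGs, since a SIMUG has
at most one parametrized in-edge at `j`. Every vertex of such a path, `i` included, has an
out-edge in `T k` (the last one via `(i, j)`), and no vertex has out-edges in two edge-disjoint
SIMUGs, so the paths are vertex-disjoint.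
-/

/-- The vertex set of a subgraph given by its edge set. -/
def verts {V : Type*} (T : Set (V × V)) : Set V :=
  {v | ∃ w, (v, w) ∈ T ∨ (w, v) ∈ T}

/-- Reachability by directed paths using edges of `T`. -/
def Reach {V : Type*} (T : Set (V × V)) : V → V → Prop :=
  Relation.ReflTransGen (fun a b => (a, b) ∈ T)

/-- The set of parametrized in-neighbors of `j` within the subgraph `T`,
where `Ep` is the set of parametrized edges. -/
def Pset {V : Type*} (Ep T : Set (V × V)) (j : V) : Set V :=
  {i | (i, j) ∈ T ∧ (i, j) ∈ Ep}

/-- A single-source identifiable multi-rooted graph (SIMUG) with edge set `T`,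
root set `R`, and parametrized edges `Ep`: it has at least two vertices, a
nonempty root set of vertices each of which reaches every vertex of `T`, and
every vertex has at most one incoming parametrized edge within `T`. -/
def IsSIMUG {V : Type*} (Ep T : Set (V × V)) (R : Set V) : Prop :=
  (verts T).Nontrivial ∧ R.Nonempty ∧ R ⊆ verts T ∧
  (∀ r ∈ R, ∀ v ∈ verts T, Reach T r v) ∧
  (∀ j : V, (Pset Ep T j).Subsingleton)

/-- Edge-disjointness of two subgraphs: no common edges, and no vertex has
outgoing edges in both subgraphs. -/
def EdgeDisjoint {V : Type*} (T₁ T₂ : Set (V × V)) : Prop :=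
  Disjoint T₁ T₂ ∧ ∀ j : V, (∃ w, (j, w) ∈ T₁) → (∃ w, (j, w) ∈ T₂) → False

/-- `A` is mergeable to `B` (with root set `RB` of `B`): the union graph is a
SIMUG, and every root of `B` has a directed path in the union to every vertex
of `A`. -/
def Mergeable {V : Type*} (Ep A B : Set (V × V)) (RB : Set V) : Prop :=
  (∃ R : Set V, IsSIMUG Ep (A ∪ B) R) ∧
  ∀ r ∈ RB, ∀ v ∈ verts A, Reach (A ∪ B) r v

namespace List

variable {α : Type*} {r : α → α → Prop}

theorem exists_isChain_nodup_of_relationReflTransGen {a b : α}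
    (h : Relation.ReflTransGen r a b) :
    ∃ l, ∃ (hl : l ≠ []), IsChain r l ∧ l.head hl = a ∧ l.getLast hl = b ∧ l.Nodup := by
  induction h using Relation.ReflTransGen.head_induction_on with
  | refl => exact ⟨[b], cons_ne_nil _ _, .singleton _, rfl, rfl, nodup_singleton _⟩
  | @head a c hac _ ih =>
    obtain ⟨l, hl, hchain, hhead, hlast, hnodup⟩ := ih
    by_cases ha : a ∈ l
    · obtain ⟨s, t, rfl⟩ := append_of_mem ha
      refine ⟨a :: t, cons_ne_nil _ _, hchain.right_of_append, rfl, ?_,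
        hnodup.sublist (sublist_append_right _ _)⟩
      rw [← hlast, getLast_append_of_ne_nil]
    · exact ⟨a :: l, cons_ne_nil _ _, hchain.isChain_cons fun _ => hhead ▸ hac, rfl,
        by rwa [getLast_cons hl], nodup_cons.2 ⟨ha, hnodup⟩⟩

theorem IsChain.exists_rel_of_mem {l : List α} (h : IsChain r l) (hl : l ≠ []) {b : α}
    (hb : r (l.getLast hl) b) {v : α} (hv : v ∈ l) : ∃ w, r v w :=
  h.backwards_induction (fun x => ∃ w, r x w) l (fun _ y hxy _ => ⟨y, hxy⟩)
    (fun _ => ⟨b, hb⟩) v hv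

end List

section SIMUG

variable {V : Type*}

theorem IsSIMUG.eq_of_mem_Pset {Ep T : Set (V × V)} {R : Set V} (hS : IsSIMUG Ep T R)
    {i₁ i₂ j : V} (h₁ : i₁ ∈ Pset Ep T j) (h₂ : i₂ ∈ Pset Ep T j) : i₁ = i₂ :=
  hS.2.2.2.2 j h₁ h₂

theorem IsSIMUG.exists_path {Ep T : Set (V × V)} {R : Set V} (hS : IsSIMUG Ep T R)
    {r i j : V} (hr : r ∈ R) (hij : (i, j) ∈ T) :
    ∃ l, ∃ (hl : l ≠ []), l.IsChain (fun a b => (a, b) ∈ T) ∧ l.head hl = r ∧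
      l.getLast hl = i ∧ l.Nodup :=
  List.exists_isChain_nodup_of_relationReflTransGen (hS.2.2.2.1 r hr i ⟨j, .inl hij⟩)

theorem EdgeDisjoint.disjoint_of_isChain {T₁ T₂ : Set (V × V)} (hD : EdgeDisjoint T₁ T₂)
    {l₁ l₂ : List V} {j₁ j₂ : V}
    (h₁ : l₁.IsChain (fun a b => (a, b) ∈ T₁)) (hl₁ : l₁ ≠ []) (hj₁ : (l₁.getLast hl₁, j₁) ∈ T₁)
    (h₂ : l₂.IsChain (fun a b => (a, b) ∈ T₂)) (hl₂ : l₂ ≠ []) (hj₂ : (l₂.getLast hl₂, j₂) ∈ T₂) :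
    l₁.Disjoint l₂ := fun _ hv₁ hv₂ =>
  hD.2 _ (h₁.exists_rel_of_mem hl₁ hj₁ hv₁) (h₂.exists_rel_of_mem hl₂ hj₂ hv₂)

end SIMUG

/-- for an edge-disjoint SIMUG covering `{T k}` of
`E_p ∪ E_f` with chosen roots `τ k`, and any vertex `j`, there exist
`|P_j|` vertex-disjoint directed paths from `{τ 1, …, τ n}` to the
parametrized in-neighbor set `P_j = {i | (i,j) ∈ E_p}`: one path ending at
each element of `P_j`, starting at some `τ k`, and pairwise sharing no
vertices. -/
theorem stmt13 {V : Type*} (n : ℕ) (Ep Ef : Set (V × V))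
    (T : Fin n → Set (V × V)) (R : Fin n → Set V)
    (hS : ∀ k, IsSIMUG Ep (T k) (R k))
    (hD : ∀ k l, k ≠ l → EdgeDisjoint (T k) (T l))
    (hcov : (⋃ k, T k) = Ep ∪ Ef)
    (τ : Fin n → V) (hτ : ∀ k, τ k ∈ R k) (j : V) :
    ∃ p : V → List V,
      (∀ i, (i, j) ∈ Ep →
        (p i ≠ [] ∧ (∀ h : p i ≠ [], (p i).head h ∈ Set.range τ ∧
            (p i).getLast h = i) ∧
          (p i).Chain' (fun a b => (a, b) ∈ Ep ∪ Ef) ∧ (p i).Nodup)) ∧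
      (∀ i₁ i₂, (i₁, j) ∈ Ep → (i₂, j) ∈ Ep → i₁ ≠ i₂ →
        ∀ v, v ∈ p i₁ → v ∉ p i₂) := by
  classical
  have hcovered (i) (hi : (i, j) ∈ Ep) : ∃ k, (i, j) ∈ T k :=
    Set.mem_iUnion.mp (hcov ▸ Or.inl hi)
  choose k hk using hcovered
  have hpath (i) (hi : (i, j) ∈ Ep) := (hS (k i hi)).exists_path (hτ _) (hk i hi)
  choose L hL hchain hhead hlast hnodup using hpath
  refine ⟨fun i => if hi : (i, j) ∈ Ep then L i hi else [], fun i hi => ?_,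
    fun i₁ i₂ h₁ h₂ hne => ?_⟩
  · simp only [dif_pos hi]
    exact ⟨hL i hi, fun _ => ⟨⟨k i hi, (hhead i hi).symm⟩, hlast i hi⟩,
      (hchain i hi).imp fun a b hab => hcov ▸ Set.mem_iUnion_of_mem _ hab, hnodup i hi⟩
  · have hkne : k i₁ h₁ ≠ k i₂ h₂ := fun he =>
      hne <| (hS (k i₁ h₁)).eq_of_mem_Pset ⟨hk i₁ h₁, h₁⟩ ⟨he ▸ hk i₂ h₂, h₂⟩
    simp only [dif_pos h₁, dif_pos h₂]
    exact (hD _ _ hkne).disjoint_of_isChain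
      (hchain i₁ h₁) (hL i₁ h₁) (by rw [hlast]; exact hk i₁ h₁)
      (hchain i₂ h₂) (hL i₂ h₂) (by rw [hlast]; exact hk i₂ h₂)
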